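/- arXiv:1706.01778 — 4 statements merged into one kernel-verified Lean document; each statement's English description precedes it below -/
import Mathlib

section
/- Under complete randomization of n units with n_1 treated and n_0 = n − n_1 control (1 ≤ n_1 ≤ n−1), the variance of the difference-in-means estimator θ̂ = (1/n_1)Σ X_i Y_i(1) − (1/n_0)Σ (1−X_i) Y_i(0) equals S_1²/n_1 + S_0²/n_0 − S_θ²/n, where S_1², S_0², S_θ² are the finite-population variances (with divisor n−1) of Y_i(1), Y_i(0), and θ_i = Y_i(1) − Y_i(0), respectively. -/
/-!
Write `a i = Y i(1) - Ȳ(1)`, `b i = Y i(0) - Ȳ(0)` and `h i = a i / n₁ + b i / n₀`. For every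
treated set `S` of size `n₁`, `θ̂ S = θ̄ + ∑ i ∈ S, h i`, and `∑ i, h i = 0`. For a centred `h`,
the second moment of `∑ i ∈ S, h i` over all `n₁`-subsets is computed by counting the subsets
that contain `i` but not `j`; this gives the sampling variance `n₁ n₀ / (n (n - 1)) ∑ i, h i ^ 2`.
The theorem then follows from the pointwise identity
`n₁ n₀ / n * (a / n₁ + b / n₀) ^ 2 = a ^ 2 / n₁ + b ^ 2 / n₀ - (a - b) ^ 2 / n`.
-/

open Finset

theorem Nat.choose_sub_two_mul_eq {n : ℕ} (hn : 2 ≤ n) (k : ℕ) :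
    (n - 2).choose k * (n * (n - 1)) = n.choose (k + 1) * ((k + 1) * (n - (k + 1))) := by
  obtain ⟨m, rfl⟩ := Nat.exists_eq_add_of_le' hn
  have h₁ := Nat.choose_mul_succ_eq m k
  have h₂ := Nat.add_one_mul_choose_eq (m + 1) k
  rw [Nat.add_sub_cancel, show m + 2 - 1 = m + 1 by omega,
    show m + 2 - (k + 1) = m + 1 - k by omega]
  calc m.choose k * ((m + 2) * (m + 1))
      = (m + 2) * (m.choose k * (m + 1)) := by ring
    _ = (m + 2) * (m + 1).choose k * (m + 1 - k) := by rw [h₁, mul_assoc]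
    _ = (m + 2).choose (k + 1) * ((k + 1) * (m + 1 - k)) := by rw [h₂]; ring

namespace Finset

variable {α : Type*} [DecidableEq α] {s : Finset α}

theorem card_filter_mem_powersetCard_succ {a : α} (ha : a ∈ s) (k : ℕ) :
    #{T ∈ powersetCard (k + 1) s | a ∈ T} = (#s - 1).choose k := by
  rw [← card_erase_of_mem ha, ← card_powersetCard]
  refine card_nbij' (·.erase a) (insert a) ?_ ?_ ?_ ?_
  · intro T hT
    simp only [coe_filter, mem_powersetCard, Set.mem_ofPred_eq, mem_coe] at hT ⊢
    exact ⟨erase_subset_erase a hT.1.1, by rw [card_erase_of_mem hT.2, hT.1.2]; rfl⟩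
  · intro T hT
    simp only [coe_filter, mem_powersetCard, Set.mem_ofPred_eq, mem_coe] at hT ⊢
    have haT : a ∉ T := fun h => (mem_erase.mp (hT.1 h)).1 rfl
    refine ⟨⟨insert_subset ha (hT.1.trans (erase_subset a s)), ?_⟩, mem_insert_self a T⟩
    rw [card_insert_of_notMem haT, hT.2]
  · intro T hT
    exact insert_erase (mem_filter.mp hT).2
  · intro T hT
    exact erase_insert fun h => (mem_erase.mp ((mem_powersetCard.mp hT).1 h)).1 rfl

theorem card_filter_mem_notMem_powersetCard_succ {a b : α} (ha : a ∈ s) (hb : b ∈ s) (k : ℕ) :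
    #{T ∈ powersetCard (k + 1) s | a ∈ T ∧ b ∉ T} = if a = b then 0 else (#s - 2).choose k := by
  split_ifs with hab
  · simp [hab]
  · have : {T ∈ powersetCard (k + 1) s | a ∈ T ∧ b ∉ T}
        = {T ∈ powersetCard (k + 1) (s.erase b) | a ∈ T} := by
      ext T
      simp only [mem_filter, mem_powersetCard, subset_erase]
      tauto
    rw [this, card_filter_mem_powersetCard_succ (mem_erase.mpr ⟨hab, ha⟩), card_erase_of_mem hb]
    rfl

theorem sum_powersetCard_sum {M : Type*} [AddCommMonoid M] (f : α → M) (k : ℕ) :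
    ∑ T ∈ powersetCard (k + 1) s, ∑ i ∈ T, f i = (#s - 1).choose k • ∑ i ∈ s, f i := by
  rw [sum_comm' (t' := s) (s' := fun i => {T ∈ powersetCard (k + 1) s | i ∈ T})]
  · rw [smul_sum]
    refine sum_congr rfl fun i hi => ?_
    rw [sum_const, card_filter_mem_powersetCard_succ hi]
  · intro T i
    simp only [mem_filter, mem_powersetCard]
    constructor
    · rintro ⟨⟨hTs, hT⟩, hi⟩
      exact ⟨⟨⟨hTs, hT⟩, hi⟩, hTs hi⟩
    · rintro ⟨h, -⟩
      exact h

/-- Since `∑ i ∈ s, f i = 0`, the square of `∑ i ∈ T, f i` is `-(∑ i ∈ T, f i) * ∑ j ∈ s \ T, f j`,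
so only the number of samples containing `i` but not `j` enters. -/
theorem sum_powersetCard_sum_sq {R : Type*} [CommRing R] {f : α → R} (hf : ∑ i ∈ s, f i = 0)
    (k : ℕ) :
    ∑ T ∈ powersetCard (k + 1) s, (∑ i ∈ T, f i) ^ 2
      = ((#s - 2).choose k : R) * ∑ i ∈ s, f i ^ 2 := by
  have cross : ∀ T ∈ powersetCard (k + 1) s, (∑ i ∈ T, f i) ^ 2
      = -∑ i ∈ s, ∑ j ∈ s, if i ∈ T ∧ j ∉ T then f i * f j else 0 := by
    intro T hT
    have hTs := (mem_powersetCard.mp hT).1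
    have hcompl : ∑ j ∈ s \ T, f j = -∑ i ∈ T, f i := by
      rw [eq_neg_iff_add_eq_zero, sum_sdiff hTs, hf]
    simp_rw [← ite_zero_mul_ite_zero, ← mul_sum, ← sum_mul, ← sum_filter, filter_mem_eq_inter,
      filter_notMem_eq_sdiff, inter_eq_right.mpr hTs, hcompl]
    ring
  have count : ∀ i ∈ s, ∀ j ∈ s,
      ∑ T ∈ powersetCard (k + 1) s, (if i ∈ T ∧ j ∉ T then f i * f j else 0)
        = ((#s - 2).choose k : R) * (f i * f j)
          - if i = j then ((#s - 2).choose k : R) * f i ^ 2 else 0 := by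
    intro i hi j hj
    rw [← sum_filter, sum_const, card_filter_mem_notMem_powersetCard_succ hi hj, nsmul_eq_mul]
    split_ifs with hij
    · subst hij; ring
    · ring
  rw [sum_congr rfl cross, sum_neg_distrib, sum_comm]
  simp_rw [sum_comm (s := powersetCard (k + 1) s) (t := s)]
  rw [sum_congr rfl fun i hi => sum_congr rfl fun j hj => count i hi j hj]
  simp [sum_sub_distrib, sum_ite_eq, ← mul_sum, hf]

end Finset

noncomputable def uniformVariance {α : Type*} (A : Finset α) (f : α → ℝ) : ℝ :=
  (∑ a ∈ A, f a ^ 2) / #A - ((∑ a ∈ A, f a) / #A) ^ 2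

theorem uniformVariance_eq_of_eq_const_add {α : Type*} {A : Finset α} {f g : α → ℝ} (c : ℝ)
    (h : ∀ a ∈ A, f a = c + g a) : uniformVariance A f = uniformVariance A g := by
  rcases A.eq_empty_or_nonempty with rfl | hA
  · simp [uniformVariance]
  have hA' : (#A : ℝ) ≠ 0 := by exact_mod_cast hA.card_ne_zero
  have hsq : ∀ a ∈ A, f a ^ 2 = c ^ 2 + 2 * c * g a + g a ^ 2 := fun a ha => by
    rw [h a ha]; ring
  simp only [uniformVariance, sum_congr rfl h, sum_congr rfl hsq, sum_add_distrib, sum_const,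
    nsmul_eq_mul, ← mul_sum]
  field_simp
  ring

theorem uniformVariance_powersetCard_sum {α : Type*} [DecidableEq α] {s : Finset α} {f : α → ℝ}
    (hf : ∑ i ∈ s, f i = 0) (hs : 2 ≤ #s) {k : ℕ} (hk : k ≤ #s) :
    uniformVariance (powersetCard k s) (fun T => ∑ i ∈ T, f i)
      = k * (#s - k : ℕ) / (#s * (#s - 1)) * ∑ i ∈ s, f i ^ 2 := by
  cases k with
  | zero => simp [uniformVariance]
  | succ k =>
    have hC : ((#s).choose (k + 1) : ℝ) ≠ 0 := by exact_mod_cast (Nat.choose_pos hk).ne'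
    have hN : ((#s - 2).choose k : ℝ) * (#s * (#s - 1))
        = (#s).choose (k + 1) * ((k + 1) * (#s - (k + 1) : ℕ)) := by
      have := Nat.choose_sub_two_mul_eq hs k
      rw [← Nat.cast_pred (by omega)]
      exact_mod_cast this
    simp only [uniformVariance, sum_powersetCard_sum_sq hf, sum_powersetCard_sum, hf, smul_zero,
      card_powersetCard]
    have hs' : (2 : ℝ) ≤ #s := by exact_mod_cast hs
    have h₀ : (#s : ℝ) ≠ 0 := by positivity
    have h₁ : (#s : ℝ) - 1 ≠ 0 := by linarith
    rw [zero_div, zero_pow two_ne_zero, sub_zero]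
    field_simp
    push_cast at hN ⊢
    linear_combination (∑ i ∈ s, f i ^ 2) * hN

section Neyman

variable {ι : Type*} [Fintype ι]

theorem sum_sub_sum_div_card [Nonempty ι] (y : ι → ℝ) :
    ∑ i, (y i - (∑ j, y j) / Fintype.card ι) = 0 := by
  rw [sum_sub_distrib, sum_const, card_univ, nsmul_eq_mul, mul_div_cancel₀ _ (by positivity),
    sub_self]

theorem sum_div_card_sub_sum_compl_div_card [DecidableEq ι] (y₁ y₀ : ι → ℝ) {S : Finset ι}
    (hS : S.Nonempty) (hSc : Sᶜ.Nonempty) :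
    (∑ i ∈ S, y₁ i) / #S - (∑ i ∈ Sᶜ, y₀ i) / #Sᶜ
      = ((∑ i, y₁ i) / Fintype.card ι - (∑ i, y₀ i) / Fintype.card ι)
        + ∑ i ∈ S, ((y₁ i - (∑ j, y₁ j) / Fintype.card ι) / #S
          + (y₀ i - (∑ j, y₀ j) / Fintype.card ι) / #Sᶜ) := by
  have hN : (Fintype.card ι : ℝ) = #S + #Sᶜ := by
    rw [← Nat.cast_add, card_add_card_compl]
  have h₁ : (#S : ℝ) ≠ 0 := by exact_mod_cast hS.card_ne_zero
  have h₀ : (#Sᶜ : ℝ) ≠ 0 := by exact_mod_cast hSc.card_ne_zero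
  rw [← sum_add_sum_compl S y₀, sum_add_distrib, ← sum_div, ← sum_div, sum_sub_distrib,
    sum_sub_distrib, sum_const, sum_const, nsmul_eq_mul, nsmul_eq_mul, hN]
  field_simp
  ring

end Neyman

theorem sum_sq_div_add_sum_sq_div_sub_sum_sq_div {ι : Type*} (s : Finset ι) (a b : ι → ℝ)
    {n₁ n₀ : ℝ} (h₁ : n₁ ≠ 0) (h₀ : n₀ ≠ 0) (h : n₁ + n₀ ≠ 0) :
    (∑ i ∈ s, a i ^ 2) / n₁ + (∑ i ∈ s, b i ^ 2) / n₀ - (∑ i ∈ s, (a i - b i) ^ 2) / (n₁ + n₀)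
      = n₁ * n₀ / (n₁ + n₀) * ∑ i ∈ s, (a i / n₁ + b i / n₀) ^ 2 := by
  simp only [sum_div, ← sum_add_distrib, ← sum_sub_distrib, mul_sum]
  refine sum_congr rfl fun i _ => ?_
  field_simp
  ring

/-- Neyman's variance formula for the difference-in-means estimator under
complete randomization. -/
theorem stmt1 (n n₁ : ℕ) (h1 : 1 ≤ n₁) (h2 : n₁ ≤ n - 1)
    (Y1 Y0 : Fin n → ℝ) :
    let n₀ : ℕ := n - n₁
    let θhat : Finset (Fin n) → ℝ :=
      fun S => (∑ i ∈ S, Y1 i) / (n₁ : ℝ) - (∑ i ∈ Sᶜ, Y0 i) / (n₀ : ℝ)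
    let A := (univ : Finset (Fin n)).powersetCard n₁
    let Ybar1 := (∑ i, Y1 i) / (n : ℝ)
    let Ybar0 := (∑ i, Y0 i) / (n : ℝ)
    let θbar := (∑ i, (Y1 i - Y0 i)) / (n : ℝ)
    let S1sq := (∑ i, (Y1 i - Ybar1) ^ 2) / ((n : ℝ) - 1)
    let S0sq := (∑ i, (Y0 i - Ybar0) ^ 2) / ((n : ℝ) - 1)
    let Sθsq := (∑ i, ((Y1 i - Y0 i) - θbar) ^ 2) / ((n : ℝ) - 1)
    (∑ S ∈ A, (θhat S) ^ 2) / (A.card : ℝ)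
      - ((∑ S ∈ A, θhat S) / (A.card : ℝ)) ^ 2
    = S1sq / (n₁ : ℝ) + S0sq / (n₀ : ℝ) - Sθsq / (n : ℝ) := by
  intro n₀ θhat A Ybar1 Ybar0 θbar S1sq S0sq Sθsq
  have hn : (n : ℝ) = n₁ + n₀ := by exact_mod_cast (show n = n₁ + n₀ by omega)
  have : Nonempty (Fin n) := ⟨⟨0, by omega⟩⟩
  set h : Fin n → ℝ := fun i => (Y1 i - Ybar1) / n₁ + (Y0 i - Ybar0) / n₀
  have hθbar : θbar = Ybar1 - Ybar0 := by simp only [θbar, Ybar1, Ybar0, sum_sub_distrib, sub_div]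
  have hθhat : ∀ S ∈ A, θhat S = θbar + ∑ i ∈ S, h i := by
    intro S hS
    have hS₁ : #S = n₁ := mem_powersetCard_univ.mp hS
    have hS₀ : #Sᶜ = n₀ := by rw [card_compl, hS₁, Fintype.card_fin]
    simpa only [hS₁, hS₀, Fintype.card_fin, hθbar] using sum_div_card_sub_sum_compl_div_card Y1 Y0
      (S := S) (card_pos.mp (by omega)) (card_pos.mp (by omega))
  have hh : ∑ i, h i = 0 := by
    have h₁ := sum_sub_sum_div_card Y1
    have h₀ := sum_sub_sum_div_card Y0
    simp only [Fintype.card_fin] at h₁ h₀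
    simp only [h, sum_add_distrib, ← sum_div, Ybar1, Ybar0, h₁, h₀, zero_div, add_zero]
  calc (∑ S ∈ A, (θhat S) ^ 2) / (A.card : ℝ) - ((∑ S ∈ A, θhat S) / (A.card : ℝ)) ^ 2
      = uniformVariance A (fun S => ∑ i ∈ S, h i) := uniformVariance_eq_of_eq_const_add θbar hθhat
    _ = n₁ * n₀ / n * (∑ i, h i ^ 2) / (n - 1) := by
      rw [div_mul_eq_mul_div, div_div, ← div_mul_eq_mul_div]
      simpa only [card_univ, Fintype.card_fin] using uniformVariance_powersetCard_sum hh
        (by simpa using (by omega : 2 ≤ n)) (k := n₁) (by simpa using (by omega : n₁ ≤ n))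
    _ = S1sq / (n₁ : ℝ) + S0sq / (n₀ : ℝ) - Sθsq / (n : ℝ) := by
      have hθ : ∀ i, Y1 i - Y0 i - θbar = (Y1 i - Ybar1) - (Y0 i - Ybar0) := fun i => by
        rw [hθbar]; ring
      rw [hn, ← sum_sq_div_add_sum_sq_div_sub_sum_sq_div univ _ _ (by positivity)
        (by exact_mod_cast (show n₀ ≠ 0 by omega)) (by exact_mod_cast (show n₁ + n₀ ≠ 0 by omega))]
      simp only [S1sq, S0sq, Sθsq, hθ, ← hn]
      ring
end

section
/- Under complete randomization, the expected value of the sample variance of the treated outcomes, Ŝ_1² = (1/(n_1−1)) Σ X_i (Y_i(1) − (1/n_1)Σ_j X_j Y_j(1))², equals the population variance S_1² = (1/(n−1)) Σ_i (Y_i(1) − Ȳ(1))², where n_1 ≥ 2. -/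
/-!
Both variances are sums of squared pairwise differences: for a set of `m` units,
`∑ (Yᵢ - Ȳ)² = (1 / 2m) ∑ᵢ ∑ⱼ (Yᵢ - Yⱼ)²`. Summing the sample version over all `n₁`-subsets,
each ordered pair of distinct units is counted in `C(n-2, n₁-2)` of the `C(n, n₁)` subsets,
and `C(n-2, n₁-2) / C(n, n₁) = n₁ (n₁-1) / (n (n-1))` turns the normalisation `n₁ (n₁-1)`
into `n (n-1)`.
-/

open Finset

theorem sum_sq_sub_mean_eq_sum_sum_sq_sub_div {α K : Type*} [Field K] [CharZero K]
    (S : Finset α) (Y : α → K) :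
    ∑ i ∈ S, (Y i - (∑ j ∈ S, Y j) / #S) ^ 2
      = (∑ i ∈ S, ∑ j ∈ S, (Y i - Y j) ^ 2) / (2 * #S) := by
  rcases S.eq_empty_or_nonempty with rfl | hS
  · simp
  have hcard : (#S : K) ≠ 0 := Nat.cast_ne_zero.2 (card_ne_zero.2 hS)
  set T := ∑ j ∈ S, Y j
  simp only [sub_sq, sum_add_distrib, sum_sub_distrib, sum_const, nsmul_eq_mul, ← sum_mul,
    ← mul_sum]
  field_simp
  ring

theorem sum_powersetCard_sum_sum_eq_choose_smul {α M : Type*} [DecidableEq α] [AddCommMonoid M]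
    (s : Finset α) {k : ℕ} (hk : 2 ≤ k) (g : α → α → M) (hg : ∀ i, g i i = 0) :
    ∑ S ∈ s.powersetCard k, ∑ i ∈ S, ∑ j ∈ S, g i j
      = (#s - 2).choose (k - 2) • ∑ i ∈ s, ∑ j ∈ s, g i j := by
  simp only [← sum_product' _ _ g, smul_sum]
  rw [sum_comm' (t' := s ×ˢ s) (s' := fun p => (s.powersetCard k).filter ({p.1, p.2} ⊆ ·))]
  · refine sum_congr rfl fun ⟨i, j⟩ hij => ?_
    obtain rfl | hne := eq_or_ne i j
    · simp [hg]
    rw [sum_const, card_filter_powersetCard_subset, card_pair hne]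
    · simpa [insert_subset_iff] using hij
    · simp [card_pair hne, hk]
  · rintro S ⟨i, j⟩
    simp only [mem_filter, mem_powersetCard, mem_product, insert_subset_iff, singleton_subset_iff]
    constructor
    · rintro ⟨⟨hS, hSk⟩, hi, hj⟩
      exact ⟨⟨⟨hS, hSk⟩, hi, hj⟩, hS hi, hS hj⟩
    · rintro ⟨⟨⟨hS, hSk⟩, hi, hj⟩, -⟩
      exact ⟨⟨hS, hSk⟩, hi, hj⟩

theorem cast_choose_mul_mul_sub_one {K : Type*} [Field K] [CharZero K] (n : ℕ) {k : ℕ}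
    (hk : 2 ≤ k) :
    (n.choose k : K) * (k * (k - 1)) = n * (n - 1) * (n - 2).choose (k - 2) := by
  have h := congrArg (Nat.cast : ℕ → K) (Nat.choose_mul (n := n) hk)
  push_cast [Nat.cast_choose_two] at h
  linear_combination 2 * h

/-- Under complete randomization, the sample variance of the treated outcomes is
unbiased for the finite-population variance of `Y(1)`. -/
theorem stmt2 (n n₁ : ℕ) (h1 : 2 ≤ n₁) (h2 : n₁ ≤ n)
    (Y1 : Fin n → ℝ) :
    let A := (univ : Finset (Fin n)).powersetCard n₁
    let S1hat : Finset (Fin n) → ℝ :=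
      fun S => (∑ i ∈ S, (Y1 i - (∑ j ∈ S, Y1 j) / (n₁ : ℝ)) ^ 2) / ((n₁ : ℝ) - 1)
    let Ybar1 := (∑ i, Y1 i) / (n : ℝ)
    let S1sq := (∑ i, (Y1 i - Ybar1) ^ 2) / ((n : ℝ) - 1)
    (∑ S ∈ A, S1hat S) / (A.card : ℝ) = S1sq := by
  intro A S1hat Ybar1 S1sq
  have hS1hat : ∀ S ∈ A,
      S1hat S = (∑ i ∈ S, ∑ j ∈ S, (Y1 i - Y1 j) ^ 2) / (2 * n₁ * (n₁ - 1)) := by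
    intro S hS
    simp only [S1hat, ← (mem_powersetCard.1 hS).2, sum_sq_sub_mean_eq_sum_sum_sq_sub_div, div_div]
  have hS1sq : S1sq = (∑ i, ∑ j, (Y1 i - Y1 j) ^ 2) / (2 * n * (n - 1)) := by
    have h := sum_sq_sub_mean_eq_sum_sum_sq_sub_div univ Y1
    rw [card_univ, Fintype.card_fin] at h
    simp only [S1sq, Ybar1, h, div_div]
  have hchoose : (n.choose n₁ : ℝ) ≠ 0 := by exact_mod_cast (Nat.choose_pos h2).ne'
  have hn₁ : (2 : ℝ) ≤ n₁ := by exact_mod_cast h1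
  have hn : (2 : ℝ) ≤ n := by exact_mod_cast h1.trans h2
  have : (n₁ : ℝ) - 1 ≠ 0 := by linarith
  have : (n : ℝ) - 1 ≠ 0 := by linarith
  have : (n : ℝ) ≠ 0 := by linarith
  rw [sum_congr rfl hS1hat, ← sum_div, sum_powersetCard_sum_sum_eq_choose_smul _ h1 _ (by simp),
    card_powersetCard, card_univ, Fintype.card_fin, hS1sq, nsmul_eq_mul]
  field_simp
  linear_combination -(∑ i, ∑ j, (Y1 i - Y1 j) ^ 2) * cast_choose_mul_mul_sub_one (K := ℝ) n h1
end

section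
/- Suppose U_1,...,U_n are independent random k-vectors with E[U_i] = B Z_i (Z_i fixed, Σ Z_i Z_i' invertible), X_i = U_i − B Z_i, and potential outcomes are linear: Y_i = U_i'θ_i + ξ_i almost surely with θ_i, ξ_i deterministic. If Σ_i E[X_i X_i'] is invertible, then the causal estimand θ^causal = (Σ_i E[X_i X_i'])^{-1} Σ_i E[X_i Y_i] equals the weighted average (Σ_i E[X_i X_i'])^{-1} Σ_i E[X_i X_i'] θ_i of the unit-level causal coefficients θ_i. -/
open MeasureTheory ProbabilityTheory

section

variable {Ω ι : Type*} [MeasurableSpace Ω] {μ : Measure Ω} [Fintype ι]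

theorem integral_mul_affine_eq_mulVec {X : Ω → ι → ℝ} {Y : Ω → ℝ} {θ : ι → ℝ} {c : ℝ}
    (hX : ∀ a, Integrable (fun ω => X ω a) μ)
    (hXX : ∀ a b, Integrable (fun ω => X ω a * X ω b) μ)
    (hmean : ∀ a, ∫ ω, X ω a ∂μ = 0)
    (hY : ∀ᵐ ω ∂μ, Y ω = ∑ b, X ω b * θ b + c) :
    (fun a => ∫ ω, X ω a * Y ω ∂μ)
      = (Matrix.of fun a b => ∫ ω, X ω a * X ω b ∂μ).mulVec θ := by
  funext a
  have hterm : ∀ b, Integrable (fun ω => X ω a * X ω b * θ b) μ :=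
    fun b => (hXX a b).mul_const _
  calc ∫ ω, X ω a * Y ω ∂μ
      = ∫ ω, (∑ b, X ω a * X ω b * θ b) + X ω a * c ∂μ := by
        refine integral_congr_ae (hY.mono fun ω hω => ?_)
        simp only [hω, mul_add, Finset.mul_sum, mul_assoc]
    _ = ∑ b, (∫ ω, X ω a * X ω b ∂μ) * θ b + (∫ ω, X ω a ∂μ) * c := by
        rw [integral_add (integrable_finsetSum _ fun b _ => hterm b) ((hX a).mul_const c),
          integral_finsetSum _ fun b _ => hterm b, integral_mul_const]
        simp only [integral_mul_const]
    _ = _ := by simp [hmean, Matrix.mulVec, dotProduct]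

variable [IsProbabilityMeasure μ]

/-- Centring `U` at its mean turns `Y = U ⬝ θ + ξ` into `Y = X ⬝ θ + (m ⬝ θ + ξ)` with `E[X] = 0`,
so the intercept drops out of `E[X Y]`. -/
theorem integral_centered_mul_linear_eq_mulVec {U : Ω → ι → ℝ} {Y : Ω → ℝ} {m θ : ι → ℝ}
    {ξ : ℝ} (hU : ∀ a, Integrable (fun ω => U ω a) μ)
    (hUU : ∀ a b, Integrable (fun ω => U ω a * U ω b) μ)
    (hmean : ∀ a, ∫ ω, U ω a ∂μ = m a)
    (hY : ∀ᵐ ω ∂μ, Y ω = ∑ b, U ω b * θ b + ξ) :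
    (fun a => ∫ ω, (U ω a - m a) * Y ω ∂μ)
      = (Matrix.of fun a b => ∫ ω, (U ω a - m a) * (U ω b - m b) ∂μ).mulVec θ := by
  refine integral_mul_affine_eq_mulVec (X := fun ω a => U ω a - m a)
    (c := ∑ b, m b * θ b + ξ) (fun a => (hU a).sub (integrable_const _)) (fun a b => ?_)
    (fun a => ?_) (hY.mono fun ω hω => ?_)
  · have h := ((hUU a b).sub ((hU a).mul_const (m b))).sub
      (((hU b).const_mul (m a)).sub (integrable_const (m a * m b)))
    exact h.congr (ae_of_all _ fun ω => by simp only [Pi.sub_apply]; ring)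
  · rw [integral_sub (hU a) (integrable_const _), hmean, integral_const, probReal_univ,
      one_smul, sub_self]
  · simp only [hω, sub_mul, Finset.sum_sub_distrib]
    ring

end

theorem stmt15_general {Ω : Type*} [MeasurableSpace Ω] (μ : Measure Ω)
    [IsProbabilityMeasure μ] (n k l : ℕ)
    (U : Fin n → Ω → Fin k → ℝ) (Z : Fin n → Fin l → ℝ)
    (B : Matrix (Fin k) (Fin l) ℝ) (θi : Fin n → Fin k → ℝ) (ξ : Fin n → ℝ)
    (Y : Fin n → Ω → ℝ)
    (hint1 : ∀ i a, Integrable (fun ω => U i ω a) μ)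
    (hint2 : ∀ i a b, Integrable (fun ω => U i ω a * U i ω b) μ)
    (hmean : ∀ i a, ∫ ω, U i ω a ∂μ = B.mulVec (Z i) a)
    (hY : ∀ i, ∀ᵐ ω ∂μ, Y i ω = (∑ a, U i ω a * θi i a) + ξ i) :
    let X : Fin n → Ω → Fin k → ℝ :=
      fun i ω a => U i ω a - B.mulVec (Z i) a
    let EXX : Fin n → Matrix (Fin k) (Fin k) ℝ :=
      fun i => Matrix.of fun a b => ∫ ω, X i ω a * X i ω b ∂μ
    IsUnit (∑ i, EXX i) →
    (∑ i, EXX i)⁻¹.mulVec (fun a => ∑ i, ∫ ω, X i ω a * Y i ω ∂μ)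
      = (∑ i, EXX i)⁻¹.mulVec (∑ i, (EXX i).mulVec (θi i)) := by
  intro X EXX _
  have hcross : ∀ i, (fun a => ∫ ω, X i ω a * Y i ω ∂μ) = (EXX i).mulVec (θi i) := fun i =>
    integral_centered_mul_linear_eq_mulVec (hint1 i) (hint2 i) (hmean i) (hY i)
  congr 1
  funext a
  simp only [Finset.sum_apply, ← hcross]

/-- Under random assignment with mean linear in attributes and linear potential
outcomes, the causal regression estimand is a matrix-weighted average of the
unit-level causal coefficients `θ_i`, with weights `E[X_i X_i']`. -/
theorem stmt15 {Ω : Type*} [MeasurableSpace Ω] (μ : Measure Ω)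
    [IsProbabilityMeasure μ] (n k l : ℕ)
    (U : Fin n → Ω → Fin k → ℝ) (Z : Fin n → Fin l → ℝ)
    (B : Matrix (Fin k) (Fin l) ℝ) (θi : Fin n → Fin k → ℝ) (ξ : Fin n → ℝ)
    (Y : Fin n → Ω → ℝ)
    (hUmeas : ∀ i, Measurable (U i))
    (hindep : iIndepFun U μ)
    (hint1 : ∀ i a, Integrable (fun ω => U i ω a) μ)
    (hint2 : ∀ i a b, Integrable (fun ω => U i ω a * U i ω b) μ)
    (hmean : ∀ i a, ∫ ω, U i ω a ∂μ = B.mulVec (Z i) a)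
    (hZ : IsUnit (∑ i, Matrix.vecMulVec (Z i) (Z i)))
    (hY : ∀ i, ∀ᵐ ω ∂μ, Y i ω = (∑ a, U i ω a * θi i a) + ξ i) :
    let X : Fin n → Ω → Fin k → ℝ :=
      fun i ω a => U i ω a - B.mulVec (Z i) a
    let EXX : Fin n → Matrix (Fin k) (Fin k) ℝ :=
      fun i => Matrix.of fun a b => ∫ ω, X i ω a * X i ω b ∂μ
    IsUnit (∑ i, EXX i) →
    (∑ i, EXX i)⁻¹.mulVec (fun a => ∑ i, ∫ ω, X i ω a * Y i ω ∂μ)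
      = (∑ i, EXX i)⁻¹.mulVec (∑ i, (EXX i).mulVec (θi i)) :=
  stmt15_general μ n k l U Z B θi ξ Y hint1 hint2 hmean hY
end

section
/- Under complete randomization with n_1 treated units, the conditional expectation of the difference-in-means estimator given the sampling indicators R (with R having N_1 ≥ 1 treated and N_0 ≥ 1 control sampled units) equals the sample average treatment effect (1/N) Σ_i R_i (Y_i(1) − Y_i(0)), when assignment X is uniform over assignments with n_1 treated among all n units and independent considerations make each sampled unit equally likely to be treated. -/
/-!
Writing `S = T ∪ U` with `T = Rs ∩ S` and `U = S \ Rs` identifies the admissible assignments with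
pairs of an `N₁`-subset `T` of the sample and a `(n₁ - N₁)`-subset `U` of its complement, so
averaging over assignments amounts to averaging over `T`. By double counting, a sampled unit lies
in the fraction `N₁ / N` of the `N₁`-subsets of the sample and outside the fraction `N₀ / N`, so the
two group means average to the sample means of `Y(1)` and `Y(0)`.
-/

open Finset

namespace Finset

variable {α : Type*} [DecidableEq α]

theorem card_filter_powersetCard_mem (s : Finset α) {k : ℕ} (hk : k ≠ 0) {i : α} (hi : i ∈ s) :
    #{T ∈ s.powersetCard k | i ∈ T} = (#s - 1).choose (k - 1) := by
  simpa only [singleton_subset_iff, card_singleton] using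
    card_filter_powersetCard_subset {i} s k (singleton_subset_iff.2 hi)
      (Nat.one_le_iff_ne_zero.2 hk)

theorem card_mul_sum_powersetCard_sum {R : Type*} [CommSemiring R] (s : Finset α) (k : ℕ)
    (f : α → R) :
    #s * ∑ T ∈ s.powersetCard k, ∑ i ∈ T, f i = k * ((#s).choose k) * ∑ i ∈ s, f i := by
  rcases Nat.eq_zero_or_pos k with rfl | hk
  · simp
  have hswap : ∑ T ∈ s.powersetCard k, ∑ i ∈ T, f i
      = ∑ i ∈ s, ∑ T ∈ s.powersetCard k with i ∈ T, f i :=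
    sum_comm' fun T i => by simp only [mem_filter, mem_powersetCard]; grind
  have hbinom : #s * (#s - 1).choose (k - 1) = k * (#s).choose k := by
    obtain ⟨j, rfl⟩ := Nat.exists_eq_add_of_lt hk
    cases #s with
    | zero => simp
    | succ m => simpa [mul_comm] using Nat.add_one_mul_choose_eq m j
  rw [hswap, mul_sum]
  calc ∑ i ∈ s, (#s : R) * ∑ T ∈ s.powersetCard k with i ∈ T, f i
      = ∑ i ∈ s, ((#s * (#s - 1).choose (k - 1) : ℕ) : R) * f i := by
        refine sum_congr rfl fun i hi => ?_
        rw [sum_const, card_filter_powersetCard_mem s hk.ne' hi, nsmul_eq_mul]; push_cast; ring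
    _ = k * (#s).choose k * ∑ i ∈ s, f i := by
        rw [hbinom, mul_sum]; push_cast; rfl

theorem sum_powersetCard_sum_sdiff {M : Type*} [AddCommMonoid M] (s : Finset α) {k : ℕ}
    (hk : k ≤ #s) (f : α → M) :
    ∑ T ∈ s.powersetCard k, ∑ i ∈ s \ T, f i = ∑ T ∈ s.powersetCard (#s - k), ∑ i ∈ T, f i :=
  sum_nbij' (s \ ·) (s \ ·)
    (fun T hT => by
      rw [mem_powersetCard] at hT ⊢
      exact ⟨sdiff_subset, by rw [card_sdiff_of_subset hT.1, hT.2]⟩)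
    (fun T hT => by
      rw [mem_powersetCard] at hT ⊢
      exact ⟨sdiff_subset, by rw [card_sdiff_of_subset hT.1, hT.2]; omega⟩)
    (fun T hT => sdiff_sdiff_eq_self (mem_powersetCard.1 hT).1)
    (fun T hT => sdiff_sdiff_eq_self (mem_powersetCard.1 hT).1)
    (fun _ _ => rfl)

theorem card_mul_sum_powersetCard_sum_sdiff {R : Type*} [CommSemiring R] (s : Finset α) (k : ℕ)
    (f : α → R) :
    #s * ∑ T ∈ s.powersetCard k, ∑ i ∈ s \ T, f i
      = (#s - k : ℕ) * (#s).choose k * ∑ i ∈ s, f i := by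
  rcases le_or_gt k #s with hk | hk
  · rw [sum_powersetCard_sum_sdiff s hk, card_mul_sum_powersetCard_sum, Nat.choose_symm hk]
  · simp [powersetCard_eq_empty.2 hk, Nat.choose_eq_zero_of_lt hk]

theorem inter_union_of_subset_of_disjoint {s T U : Finset α} (hT : T ⊆ s) (hU : Disjoint U s) :
    s ∩ (T ∪ U) = T := by
  rw [inter_union_distrib_left, inter_eq_right.2 hT, disjoint_iff_inter_eq_empty.1 hU.symm,
    union_empty]

theorem union_sdiff_of_subset_of_disjoint {s T U : Finset α} (hT : T ⊆ s) (hU : Disjoint U s) :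
    (T ∪ U) \ s = U := by
  rw [union_sdiff_distrib, sdiff_eq_empty_iff_subset.2 hT, sdiff_eq_self_of_disjoint hU,
    empty_union]

theorem sum_filter_card_inter_powersetCard [Fintype α] {M : Type*} [AddCommMonoid M]
    (s : Finset α) (j k : ℕ) (F : Finset α → M) :
    ∑ S ∈ (univ.powersetCard (j + k)).filter (fun S => #(s ∩ S) = j), F (s ∩ S)
      = #(sᶜ.powersetCard k) • ∑ T ∈ s.powersetCard j, F T := by
  have hprod : ∑ S ∈ (univ.powersetCard (j + k)).filter (fun S => #(s ∩ S) = j), F (s ∩ S)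
      = ∑ p ∈ s.powersetCard j ×ˢ sᶜ.powersetCard k, F p.1 := by
    refine sum_nbij' (fun S => (s ∩ S, S \ s)) (fun p => p.1 ∪ p.2) ?_ ?_ ?_ ?_ fun _ _ => rfl
    · intro S hS
      simp only [mem_filter, mem_product, mem_powersetCard] at hS ⊢
      refine ⟨⟨inter_subset_left, hS.2⟩, fun x hx => mem_compl.2 (mem_sdiff.1 hx).2, ?_⟩
      have := card_inter_add_card_sdiff S s
      rw [inter_comm] at this
      omega
    · rintro ⟨T, U⟩ hp
      simp only [mem_filter, mem_product, mem_powersetCard, subset_compl_iff_disjoint_right] at hp ⊢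
      rw [inter_union_of_subset_of_disjoint hp.1.1 hp.2.1, card_union_of_disjoint
        (disjoint_of_subset_left hp.1.1 hp.2.1.symm), hp.1.2, hp.2.2]
      exact ⟨⟨subset_univ _, rfl⟩, rfl⟩
    · intro S _
      rw [inter_comm]; exact sup_inf_sdiff S s
    · rintro ⟨T, U⟩ hp
      simp only [mem_product, mem_powersetCard, subset_compl_iff_disjoint_right] at hp
      rw [inter_union_of_subset_of_disjoint hp.1.1 hp.2.1,
        union_sdiff_of_subset_of_disjoint hp.1.1 hp.2.1]
  rw [hprod, sum_product_right]
  simp only [sum_const]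

end Finset

theorem stmt16_general (n n₁ : ℕ)
    (Y1 Y0 : Fin n → ℝ) (Rs : Finset (Fin n)) (N₁ : ℕ)
    (hN₁ : 1 ≤ N₁) (hN₀ : 1 ≤ Rs.card - N₁) :
    let N := Rs.card
    let N₀ := N - N₁
    let A := ((univ : Finset (Fin n)).powersetCard n₁).filter
      (fun S => (Rs ∩ S).card = N₁)
    let θhat : Finset (Fin n) → ℝ := fun S =>
      (∑ i ∈ Rs ∩ S, Y1 i) / (N₁ : ℝ) - (∑ i ∈ Rs \ S, Y0 i) / (N₀ : ℝ)
    A.Nonempty →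
    (∑ S ∈ A, θhat S) / (A.card : ℝ)
      = (∑ i ∈ Rs, (Y1 i - Y0 i)) / (N : ℝ) := by
  intro N N₀ A θhat hA
  obtain ⟨k, rfl⟩ : ∃ k, n₁ = N₁ + k := by
    obtain ⟨S, hS⟩ := hA
    simp only [A, mem_filter, mem_powersetCard_univ] at hS
    exact Nat.exists_eq_add_of_le (hS.2 ▸ hS.1 ▸ card_le_card inter_subset_right)
  set g : Finset (Fin n) → ℝ := fun T => (∑ i ∈ T, Y1 i) / N₁ - (∑ i ∈ Rs \ T, Y0 i) / N₀
  have hθ : ∀ S, θhat S = g (Rs ∩ S) := fun S => by simp only [θhat, g, sdiff_inter_self_left]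
  set M := #(Rsᶜ.powersetCard k)
  have hsum : ∑ S ∈ A, θhat S = M • ∑ T ∈ Rs.powersetCard N₁, g T := by
    simp only [hθ]
    exact sum_filter_card_inter_powersetCard Rs N₁ k g
  have hcard : #A = M * N.choose N₁ := by
    have h := sum_filter_card_inter_powersetCard Rs N₁ k fun _ => 1
    simp only [sum_const, smul_eq_mul, mul_one] at h
    rwa [card_powersetCard N₁ Rs] at h
  obtain ⟨hM, hC⟩ := mul_ne_zero_iff.1 (hcard ▸ hA.card_pos.ne')
  have hg : N * ∑ T ∈ Rs.powersetCard N₁, g T = N.choose N₁ * ∑ i ∈ Rs, (Y1 i - Y0 i) := by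
    have hN₁' : (N₁ : ℝ) ≠ 0 := by positivity
    have hN₀' : (N₀ : ℝ) ≠ 0 := by positivity
    have h1 : (N : ℝ) * _ = _ := card_mul_sum_powersetCard_sum Rs N₁ Y1
    have h0 : (N : ℝ) * _ = N₀ * _ * _ := card_mul_sum_powersetCard_sum_sdiff Rs N₁ Y0
    simp only [g, sum_sub_distrib, ← sum_div]
    field_simp
    linear_combination (N₀ : ℝ) * h1 - (N₁ : ℝ) * h0
  have hN : (N : ℝ) ≠ 0 := Nat.cast_ne_zero.2 (by omega)
  rw [hsum, hcard, nsmul_eq_mul]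
  field_simp
  push_cast
  linear_combination (M : ℝ) * hg

/-- Conditional on the sampling indicators (and on the numbers `N₁, N₀` of
treated and control sampled units), the expectation of the difference-in-means
estimator over the completely randomized assignment equals the sample average
treatment effect. -/
theorem stmt16 (n n₁ : ℕ) (h1 : 1 ≤ n₁) (h2 : n₁ ≤ n - 1)
    (Y1 Y0 : Fin n → ℝ) (Rs : Finset (Fin n)) (N₁ : ℕ)
    (hN₁ : 1 ≤ N₁) (hN₀ : 1 ≤ Rs.card - N₁) (hle : N₁ ≤ Rs.card) :
    let N := Rs.card
    let N₀ := N - N₁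
    let A := ((univ : Finset (Fin n)).powersetCard n₁).filter
      (fun S => (Rs ∩ S).card = N₁)
    let θhat : Finset (Fin n) → ℝ := fun S =>
      (∑ i ∈ Rs ∩ S, Y1 i) / (N₁ : ℝ) - (∑ i ∈ Rs \ S, Y0 i) / (N₀ : ℝ)
    A.Nonempty →
    (∑ S ∈ A, θhat S) / (A.card : ℝ)
      = (∑ i ∈ Rs, (Y1 i - Y0 i)) / (N : ℝ) :=
  stmt16_general n n₁ Y1 Y0 Rs N₁ hN₁ hN₀
end
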